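/- arXiv:1508.01068 — 5 statements merged into one kernel-verified Lean document; each statement's English description precedes it below -/
import Mathlib

section
/- Fix regular uncountable cardinals θ < μ < λ and a sequence Σ = ⟨S_β : β < θ⟩ of pairwise disjoint subsets of λ* (the negative copy of λ), each co-initial in λ*, whose union is λ*. For δ ≤ λ put L^δ := L^{δ,λ·μ} (λ·μ is ordinal multiplication), Σ_δ := ⟨S_β ∩ δ* : β < θ⟩ and I^δ := I^{Σ_δ, λ·μ} (built on L^{δ,λ·μ} from the partition Σ_δ of δ*). Then, for θ ≤ δ ≤ δ' ≤ λ, I^δ = {X ∩ L^δ : X ∈ I^{δ'}}; consequently, for every x ∈ L^δ, I^δ_x = {X ∩ L^δ : X ∈ I^{δ'}_x}. -/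
open Ordinal Cardinal

abbrev SOrd : Type 1 := Ordinalᵒᵈ ⊕ₗ Ordinal

namespace SOrd
def neg (α : Ordinal) : SOrd := toLex (Sum.inl (OrderDual.toDual α))
def pos (α : Ordinal) : SOrd := toLex (Sum.inr α)
def IsPos (a : SOrd) : Prop := ∃ α : Ordinal, a = pos α
def val (a : SOrd) : Ordinal := Sum.elim (fun b => OrderDual.ofDual b) id (ofLex a)
end SOrd

def IsBetween (δ : Ordinal) (a : SOrd) : Prop := SOrd.neg δ < a ∧ a < SOrd.pos δ

def Lset (δ γ : Ordinal) : Set (List SOrd) :=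
  {x | x ≠ [] ∧ (∃ h : 0 < x.length, ∃ α < γ, x[0]'h = SOrd.pos α) ∧
    ∀ k, ∀ h : k < x.length, 0 < k → IsBetween δ (x[k]'h)}

def Llt (x y : List SOrd) : Prop :=
  (∃ k, ∃ hx : k < x.length, ∃ hy : k < y.length,
      x.take k = y.take k ∧ x[k]'hx < y[k]'hy) ∨
  (∃ hy : x.length < y.length, y.take x.length = x ∧ SOrd.IsPos (y[x.length]'hy)) ∨
  (∃ hx : y.length < x.length, x.take y.length = y ∧ ¬ SOrd.IsPos (x[y.length]'hx))

/-- `S` (as the indexed family `⟨S β : β < τ⟩`, where each `ξ ∈ S β` codes the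
negative ordinal `ξ*`) is a partition of `δ*`. -/
def IsPartition (δ τ : Ordinal) (S : Ordinal → Set Ordinal) : Prop :=
  (∀ β, S β ⊆ Set.Iio δ) ∧ (∀ β, τ ≤ β → S β = ∅) ∧ (∀ ξ, ξ < δ → ∃! β, ξ ∈ S β)

/-- `β^Σ(ξ*)`: the index of the piece of the partition containing `ξ*`. -/
noncomputable def colorOf (S : Ordinal → Set Ordinal) (ξ : Ordinal) : Ordinal :=
  sInf {β | ξ ∈ S β}

/-- The index set `r_x`. -/
def rIdx (τ : Ordinal) (x : List SOrd) : Set ℕ :=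
  {i | ∃ h : i < x.length, 2 ≤ i ∧ i % 2 = 0 ∧ x[i]'h < SOrd.pos τ}

/-- `Σ`-relevant sequences. -/
def Relevant (δ γ τ : Ordinal) (S : Ordinal → Set Ordinal) (x : List SOrd) : Prop :=
  x ∈ Lset δ γ ∧ 3 ≤ x.length ∧ x.length % 2 = 1 ∧
  (∀ i, ∀ h : i < x.length, (SOrd.IsPos (x[i]'h) ↔ i % 2 = 0)) ∧
  (∀ i ∈ rIdx τ x, ∀ j ∈ rIdx τ x, i < j →
    ∀ (hi : i - 1 < x.length) (hj : j - 1 < x.length),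
      colorOf S (x[j-1]'hj).val < colorOf S (x[i-1]'hi).val) ∧
  x.length - 1 ∈ rIdx τ x

/-- `J^{Σ,γ}_x = {z ∈ L^{δ,γ} : x↾(|x|-1) ≤ z < x}`. -/
def Jset (δ γ : Ordinal) (x : List SOrd) : Set (List SOrd) :=
  {z ∈ Lset δ γ | (z = x.take (x.length - 1) ∨ Llt (x.take (x.length - 1)) z) ∧ Llt z x}

/-- The initial segment `L^{δ,γ}_α = {z : z < ⟨α⟩}` (equal to `L^{δ,γ}` when `α = γ`). -/
def Lbelow (δ γ α : Ordinal) : Set (List SOrd) :=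
  {z ∈ Lset δ γ | Llt z [SOrd.pos α]}

/-- `L^{δ,γ}_x = {z ∈ L^{δ,γ} : z < x}`. -/
def Lx (δ γ : Ordinal) (x : List SOrd) : Set (List SOrd) :=
  {z ∈ Lset δ γ | Llt z x}

/-- The basic sets of `I^{Σ,γ}`. -/
def IsBasic (δ γ τ : Ordinal) (S : Ordinal → Set Ordinal) (B : Set (List SOrd)) : Prop :=
  (∃ α ≤ γ, B = Lbelow δ γ α) ∨
  (∃ x, Relevant δ γ τ S x ∧ B = Jset δ γ x) ∨
  (∃ z ∈ Lset δ γ, B = ({z} : Set (List SOrd)))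

/-- `I^{Σ,γ}`: finite unions of basic sets. -/
def Ifam (δ γ τ : Ordinal) (S : Ordinal → Set Ordinal) : Set (Set (List SOrd)) :=
  {A | ∃ E : Finset (Set (List SOrd)), (∀ B ∈ E, IsBasic δ γ τ S B) ∧
    A = ⋃ B ∈ E, (B : Set (List SOrd))}

/-- `I^{Σ,γ}_x = {A ⊆ L^{δ,γ}_x : A ∈ I^{Σ,γ}}`. -/
def Ix (δ γ τ : Ordinal) (S : Ordinal → Set Ordinal) (x : List SOrd) : Set (Set (List SOrd)) :=
  {A | A ⊆ Lx δ γ x ∧ A ∈ Ifam δ γ τ S}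


/-!
Restricting to `L^δ` sends each basic set for `δ'` to a basic set for `δ`, or to `∅`: initial
segments and singletons restrict to themselves, and so does `J_x` for `x ∈ L^δ`, because
relevance only consults the colours of entries of `x`, which lie below `δ`. If instead `x ∉ L^δ`,
then every `z` with `x↾(|x|-1) ≤ z < x` end-extends `x↾(|x|-1)`; as the last entry of `x` is
below `θ ≤ δ`, the entry of `x` outside `(δ*, δ)` already occurs in `x↾(|x|-1)`, hence in `z`,
so `J_x ∩ L^δ = ∅`. Conversely every basic set for `δ` is the restriction of the basic set for
`δ'` with the same parameters, and that lift stays inside `L^{δ'}_x` whenever the original lies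
inside `L^δ_x`, which gives the statement for `I_x`.
-/

namespace SOrd

theorem eq_pos_or_eq_neg (a : SOrd) : (∃ α, a = pos α) ∨ ∃ α, a = neg α := by
  rcases a with α | α
  · exact Or.inr ⟨OrderDual.ofDual α, rfl⟩
  · exact Or.inl ⟨α, rfl⟩

@[simp] theorem neg_lt_pos (α β : Ordinal) : neg α < pos β := Sum.Lex.sep _ _

@[simp] theorem not_pos_lt_neg (α β : Ordinal) : ¬ pos α < neg β := by
  simp [pos, neg]

@[simp] theorem pos_lt_pos {α β : Ordinal} : pos α < pos β ↔ α < β := Sum.lex_inr_inr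

@[simp] theorem neg_lt_neg {α β : Ordinal} : neg α < neg β ↔ β < α := Sum.lex_inl_inl

@[simp] theorem isPos_pos (α : Ordinal) : IsPos (pos α) := ⟨α, rfl⟩

@[simp] theorem not_isPos_neg (α : Ordinal) : ¬ IsPos (neg α) := by
  rintro ⟨β, h⟩
  cases h

@[simp] theorem pos_ne_neg (α β : Ordinal) : pos α ≠ neg β := by
  simp [pos, neg]

@[simp] theorem neg_inj {α β : Ordinal} : neg α = neg β ↔ α = β := by
  simp [neg]

@[simp] theorem val_pos (α : Ordinal) : (pos α).val = α := rfl

@[simp] theorem val_neg (α : Ordinal) : (neg α).val = α := rfl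

/-- Negatives are pushed one step down, freeing the slot `neg 0` strictly between all negative and
all positive values. -/
def shift (a : SOrd) : SOrd := Sum.elim (fun b => neg (OrderDual.ofDual b + 1)) pos (ofLex a)

@[simp] theorem shift_pos (α : Ordinal) : shift (pos α) = pos α := rfl

@[simp] theorem shift_neg (α : Ordinal) : shift (neg α) = neg (α + 1) := rfl

theorem shift_strictMono : StrictMono shift := by
  intro a b hab
  rcases a.eq_pos_or_eq_neg with ⟨α, rfl⟩ | ⟨α, rfl⟩ <;>
    rcases b.eq_pos_or_eq_neg with ⟨β, rfl⟩ | ⟨β, rfl⟩ <;> simp_all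

theorem shift_ne_neg_zero (a : SOrd) : shift a ≠ neg 0 := by
  rcases a.eq_pos_or_eq_neg with ⟨α, rfl⟩ | ⟨α, rfl⟩ <;> simp

theorem neg_zero_lt_shift {a : SOrd} : neg 0 < shift a ↔ IsPos a := by
  rcases a.eq_pos_or_eq_neg with ⟨α, rfl⟩ | ⟨α, rfl⟩ <;> simp

theorem shift_lt_neg_zero {a : SOrd} : shift a < neg 0 ↔ ¬ IsPos a := by
  rcases a.eq_pos_or_eq_neg with ⟨α, rfl⟩ | ⟨α, rfl⟩ <;> simp

end SOrd

theorem isBetween_iff {δ : Ordinal} {a : SOrd} : IsBetween δ a ↔ a.val < δ := by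
  rcases a.eq_pos_or_eq_neg with ⟨α, rfl⟩ | ⟨α, rfl⟩ <;> simp [IsBetween]

theorem IsBetween.mono {δ δ' : Ordinal} (h : δ ≤ δ') {a : SOrd} (ha : IsBetween δ a) :
    IsBetween δ' a :=
  isBetween_iff.2 ((isBetween_iff.1 ha).trans_le h)

theorem llt_cons_cons {a b : SOrd} {x y : List SOrd} :
    Llt (a :: x) (b :: y) ↔ a < b ∨ a = b ∧ Llt x y := by
  unfold Llt
  rw [← Nat.or_exists_add_one]
  simp only [List.take_zero, List.length_cons, List.take_succ_cons,
    List.getElem_cons_zero, List.getElem_cons_succ, List.cons.injEq, Nat.add_lt_add_iff_right,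
    Nat.zero_lt_succ, exists_true_left, true_and]
  constructor
  · rintro ((h | ⟨k, hx, hy, ⟨rfl, ht⟩, h⟩) | ⟨hy, ⟨rfl, ht⟩, h⟩ | ⟨hx, ⟨rfl, ht⟩, h⟩)
    · exact Or.inl h
    · exact Or.inr ⟨rfl, Or.inl ⟨k, hx, hy, ht, h⟩⟩
    · exact Or.inr ⟨rfl, Or.inr (Or.inl ⟨hy, ht, h⟩)⟩
    · exact Or.inr ⟨rfl, Or.inr (Or.inr ⟨hx, ht, h⟩)⟩
  · rintro (h | ⟨rfl, ⟨k, hx, hy, ht, h⟩ | ⟨hy, ht, h⟩ | ⟨hx, ht, h⟩⟩)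
    · exact Or.inl (Or.inl h)
    · exact Or.inl (Or.inr ⟨k, hx, hy, ⟨rfl, ht⟩, h⟩)
    · exact Or.inr (Or.inl ⟨hy, ⟨rfl, ht⟩, h⟩)
    · exact Or.inr (Or.inr ⟨hx, ⟨rfl, ht⟩, h⟩)

theorem llt_nil_cons {b : SOrd} {y : List SOrd} : Llt [] (b :: y) ↔ b.IsPos := by
  simp [Llt]

theorem llt_cons_nil {a : SOrd} {x : List SOrd} : Llt (a :: x) [] ↔ ¬ a.IsPos := by
  simp [Llt]

theorem not_llt_nil_nil : ¬ Llt [] [] := by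
  simp [Llt]

/-- The terminator `neg 0` makes a positive entry beyond the end of `x` count as above `x` and a
negative one as below it, as in clauses (ii) and (iii) of `Llt`. -/
def lexKey (x : List SOrd) : List SOrd := x.map SOrd.shift ++ [SOrd.neg 0]

@[simp] theorem lexKey_nil : lexKey [] = [SOrd.neg 0] := rfl

@[simp] theorem lexKey_cons (a : SOrd) (x : List SOrd) :
    lexKey (a :: x) = SOrd.shift a :: lexKey x := rfl

theorem lexKey_injective : Function.Injective lexKey := fun _ _ h =>
  List.map_injective_iff.2 SOrd.shift_strictMono.injective (List.append_left_injective _ h)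

theorem llt_iff_lexKey_lt {x y : List SOrd} : Llt x y ↔ lexKey x < lexKey y := by
  induction x generalizing y with
  | nil =>
    cases y with
    | nil => simp [not_llt_nil_nil]
    | cons b y =>
      simp [llt_nil_cons, List.cons_lt_cons_iff, SOrd.neg_zero_lt_shift,
        (SOrd.shift_ne_neg_zero b).symm]
  | cons a x ih =>
    cases y with
    | nil =>
      simp [llt_cons_nil, List.cons_lt_cons_iff, SOrd.shift_lt_neg_zero,
        SOrd.shift_ne_neg_zero a]
    | cons b y =>
      simp [llt_cons_cons, List.cons_lt_cons_iff, ih, SOrd.shift_strictMono.lt_iff_lt,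
        SOrd.shift_strictMono.injective.eq_iff]

theorem llt_irrefl (x : List SOrd) : ¬ Llt x x := by
  rw [llt_iff_lexKey_lt]; exact lt_irrefl _

theorem llt_trans {x y z : List SOrd} (h₁ : Llt x y) (h₂ : Llt y z) : Llt x z := by
  rw [llt_iff_lexKey_lt] at *; exact h₁.trans h₂

theorem llt_trichotomy (x y : List SOrd) : Llt x y ∨ x = y ∨ Llt y x := by
  simp only [llt_iff_lexKey_lt]
  rcases lt_trichotomy (lexKey x) (lexKey y) with h | h | h
  exacts [Or.inl h, Or.inr (Or.inl (lexKey_injective h)), Or.inr (Or.inr h)]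

theorem llt_of_llt_of_not_llt {x y z : List SOrd} (hzy : Llt z y) (hxy : ¬ Llt x y) : Llt z x := by
  rcases llt_trichotomy y x with h | rfl | h
  · exact llt_trans hzy h
  · exact hzy
  · exact absurd h hxy

theorem isPrefix_of_llt_append {u v z : List SOrd} (hu : z = u ∨ Llt u z) (hz : Llt z (u ++ v)) :
    u <+: z := by
  induction u generalizing z with
  | nil => exact List.nil_prefix
  | cons c u ih =>
    cases z with
    | nil =>
      simp only [List.cons_append, llt_nil_cons, llt_cons_nil, reduceCtorEq, false_or] at hu hz
      exact absurd hz hu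
    | cons d z =>
      rcases hu with hu | hu
      · exact hu ▸ List.prefix_refl _
      simp only [List.cons_append, llt_cons_cons] at hu hz
      rcases hu with hcd | ⟨rfl, hu⟩
      · rcases hz with hdc | ⟨rfl, -⟩
        exacts [absurd hdc hcd.not_gt, absurd hcd (lt_irrefl _)]
      · rcases hz with hcc | ⟨-, hz⟩
        exacts [absurd hcc (lt_irrefl _), List.cons_prefix_cons.2 ⟨rfl, ih (Or.inr hu) hz⟩]

section Lset

variable {δ δ' γ : Ordinal}

theorem mem_Lset_iff {x : List SOrd} :
    x ∈ Lset δ γ ↔ ∃ α < γ, ∃ t, x = SOrd.pos α :: t ∧ ∀ a ∈ t, IsBetween δ a := by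
  constructor
  · rintro ⟨hne, ⟨h0, α, hα, hx0⟩, hbet⟩
    obtain ⟨b, t, rfl⟩ := List.exists_cons_of_ne_nil hne
    refine ⟨α, hα, t, by simpa using hx0, fun a ha => ?_⟩
    obtain ⟨k, hk, rfl⟩ := List.getElem_of_mem ha
    exact hbet (k + 1) (by simpa using hk) k.succ_pos
  · rintro ⟨α, hα, t, rfl, ht⟩
    refine ⟨List.cons_ne_nil _ _, ⟨by simp, α, hα, rfl⟩, fun k hk hk0 => ?_⟩
    obtain ⟨k, rfl⟩ := Nat.exists_eq_add_of_lt hk0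
    simpa using ht _ (List.getElem_mem _)

theorem Lset_mono (h : δ ≤ δ') : Lset δ γ ⊆ Lset δ' γ := by
  intro x hx
  obtain ⟨α, hα, t, rfl, ht⟩ := mem_Lset_iff.1 hx
  exact mem_Lset_iff.2 ⟨α, hα, t, rfl, fun a ha => (ht a ha).mono h⟩

theorem mem_Lset_of_isPrefix {u x : List SOrd} (hux : u <+: x) (hu : u ≠ [])
    (hx : x ∈ Lset δ γ) : u ∈ Lset δ γ := by
  obtain ⟨α, hα, t, rfl, ht⟩ := mem_Lset_iff.1 hx
  obtain ⟨b, s, rfl⟩ := List.exists_cons_of_ne_nil hu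
  obtain ⟨rfl, hst⟩ := List.cons_prefix_cons.1 hux
  exact mem_Lset_iff.2 ⟨α, hα, s, rfl, fun a ha => ht a (hst.subset ha)⟩

theorem append_singleton_mem_Lset {u : List SOrd} {a : SOrd} (hu : u ∈ Lset δ γ)
    (ha : IsBetween δ a) : u ++ [a] ∈ Lset δ γ := by
  obtain ⟨α, hα, t, rfl, ht⟩ := mem_Lset_iff.1 hu
  refine mem_Lset_iff.2 ⟨α, hα, t ++ [a], rfl, fun b hb => ?_⟩
  rcases List.mem_append.1 hb with hb | hb
  exacts [ht b hb, List.mem_singleton.1 hb ▸ ha]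

theorem val_lt_of_mem_Lset {x : List SOrd} (hx : x ∈ Lset δ γ) {i : ℕ} (hi : i < x.length)
    (h0 : 0 < i) : (x[i]'hi).val < δ :=
  isBetween_iff.1 (hx.2.2 i hi h0)

end Lset

theorem List.take_length_sub_one_append_getElem {α : Type*} (x : List α)
    (h : x.length - 1 < x.length) : x.take (x.length - 1) ++ [x[x.length - 1]] = x := by
  rw [List.take_append_getElem, Nat.sub_add_cancel (by omega), List.take_length]

theorem llt_append_singleton {u : List SOrd} {a : SOrd} (ha : a.IsPos) : Llt u (u ++ [a]) :=
  Or.inr (Or.inl ⟨by simp, by simp, by simpa using ha⟩)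

section Relevant

variable {δ δ' γ τ : Ordinal} {S : Ordinal → Set Ordinal} {x : List SOrd}

theorem Relevant.length_sub_one_lt (hx : Relevant δ γ τ S x) : x.length - 1 < x.length := by
  have := hx.2.1; omega

theorem Relevant.take_ne_nil (hx : Relevant δ γ τ S x) : x.take (x.length - 1) ≠ [] := by
  have := hx.2.1
  rw [← List.length_pos_iff, List.length_take]; omega

theorem Relevant.isPos_getElem_last (hx : Relevant δ γ τ S x) :
    (x[x.length - 1]'hx.length_sub_one_lt).IsPos :=
  (hx.2.2.2.1 _ _).2 (by have := hx.2.2.1; omega)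

theorem Relevant.isBetween_getElem_last (hx : Relevant δ γ τ S x) (hτ : τ ≤ δ') :
    IsBetween δ' (x[x.length - 1]'hx.length_sub_one_lt) := by
  obtain ⟨β, hβ⟩ := hx.isPos_getElem_last
  obtain ⟨_, -, -, hlt⟩ := hx.2.2.2.2.2
  rw [hβ, SOrd.pos_lt_pos] at hlt
  rw [hβ, isBetween_iff, SOrd.val_pos]
  exact hlt.trans_le hτ

theorem Relevant.take_mem_Jset (hx : Relevant δ γ τ S x) :
    x.take (x.length - 1) ∈ Jset δ γ x := by
  refine ⟨mem_Lset_of_isPrefix (List.take_prefix _ _) hx.take_ne_nil hx.1, Or.inl rfl, ?_⟩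
  conv_rhs => rw [← x.take_length_sub_one_append_getElem hx.length_sub_one_lt]
  exact llt_append_singleton hx.isPos_getElem_last

theorem Jset_inter_Lset_eq_empty (hτ : τ ≤ δ) (hx : Relevant δ' γ τ S x) (hxδ : x ∉ Lset δ γ) :
    Jset δ' γ x ∩ Lset δ γ = ∅ := by
  have hsplit := x.take_length_sub_one_append_getElem hx.length_sub_one_lt
  refine Set.eq_empty_of_forall_notMem ?_
  rintro z ⟨⟨-, hz₁, hz₂⟩, hzδ⟩
  rw [← hsplit] at hz₂
  apply hxδ
  rw [← hsplit]
  exact append_singleton_mem_Lset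
    (mem_Lset_of_isPrefix (isPrefix_of_llt_append hz₁ hz₂) hx.take_ne_nil hzδ)
    (hx.isBetween_getElem_last hτ)

end Relevant

section Ifam

variable {δ γ τ : Ordinal} {S : Ordinal → Set Ordinal}

theorem empty_mem_Ifam : (∅ : Set (List SOrd)) ∈ Ifam δ γ τ S :=
  ⟨∅, by simp, by simp⟩

theorem IsBasic.mem_Ifam {B : Set (List SOrd)} (h : IsBasic δ γ τ S B) : B ∈ Ifam δ γ τ S :=
  ⟨{B}, by simpa, by simp⟩

theorem union_mem_Ifam {A A' : Set (List SOrd)} (h : A ∈ Ifam δ γ τ S)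
    (h' : A' ∈ Ifam δ γ τ S) : A ∪ A' ∈ Ifam δ γ τ S := by
  classical
  obtain ⟨E, hE, rfl⟩ := h
  obtain ⟨E', hE', rfl⟩ := h'
  refine ⟨E ∪ E', fun B hB => ?_, (Finset.set_biUnion_union _ _ _).symm⟩
  rcases Finset.mem_union.1 hB with hB | hB
  exacts [hE B hB, hE' B hB]

@[elab_as_elim]
theorem Ifam.induction_on {P : Set (List SOrd) → Prop} {A : Set (List SOrd)}
    (hA : A ∈ Ifam δ γ τ S) (empty : P ∅) (basic : ∀ B, IsBasic δ γ τ S B → P B)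
    (union : ∀ A B, P A → P B → P (A ∪ B)) : P A := by
  classical
  obtain ⟨E, hE, rfl⟩ := hA
  induction E using Finset.induction_on with
  | empty => simpa
  | insert B E _ ih =>
    rw [Finset.set_biUnion_insert]
    exact union _ _ (basic _ (hE _ (Finset.mem_insert_self _ _)))
      (ih fun C hC => hE C (Finset.mem_insert_of_mem hC))

end Ifam

section Restriction

variable {δ δ' γ τ : Ordinal} {S : Ordinal → Set Ordinal}

theorem colorOf_inter_Iio (h : δ ≤ δ') {ξ : Ordinal} (hξ : ξ < δ) :
    colorOf (fun β => S β ∩ Set.Iio δ) ξ = colorOf (fun β => S β ∩ Set.Iio δ') ξ := by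
  simp only [colorOf, Set.mem_inter_iff, Set.mem_Iio, hξ, hξ.trans_le h, and_true]

theorem relevant_inter_Iio_iff (h : δ ≤ δ') {x : List SOrd} (hx : x ∈ Lset δ γ) :
    Relevant δ γ τ (fun β => S β ∩ Set.Iio δ) x ↔
      Relevant δ' γ τ (fun β => S β ∩ Set.Iio δ') x := by
  have hcolor : ∀ j ∈ rIdx τ x, ∀ hj : j - 1 < x.length,
      colorOf (fun β => S β ∩ Set.Iio δ) (x[j - 1]'hj).val =
        colorOf (fun β => S β ∩ Set.Iio δ') (x[j - 1]'hj).val := by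
    rintro j ⟨-, hj2, -⟩ hj
    exact colorOf_inter_Iio h (val_lt_of_mem_Lset hx hj (by omega))
  unfold Relevant
  refine ⟨fun ⟨_, h3, hodd, hsign, hcol, hlast⟩ => ⟨Lset_mono h hx, h3, hodd, hsign, ?_, hlast⟩,
    fun ⟨_, h3, hodd, hsign, hcol, hlast⟩ => ⟨hx, h3, hodd, hsign, ?_, hlast⟩⟩
  · intro i hi j hj hij hi' hj'
    simpa only [← hcolor i hi hi', ← hcolor j hj hj'] using hcol i hi j hj hij hi' hj'
  · intro i hi j hj hij hi' hj'
    simpa only [hcolor i hi hi', hcolor j hj hj'] using hcol i hi j hj hij hi' hj'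

theorem sep_Lset_eq_inter (h : δ ≤ δ') (P : List SOrd → Prop) :
    {z ∈ Lset δ γ | P z} = {z ∈ Lset δ' γ | P z} ∩ Lset δ γ := by
  ext z
  exact ⟨fun ⟨hz, hP⟩ => ⟨⟨Lset_mono h hz, hP⟩, hz⟩, fun ⟨⟨_, hP⟩, hz⟩ => ⟨hz, hP⟩⟩

theorem IsBasic.inter_Lset_mem_Ifam (hτ : τ ≤ δ) (h : δ ≤ δ') {B : Set (List SOrd)}
    (hB : IsBasic δ' γ τ (fun β => S β ∩ Set.Iio δ') B) :
    B ∩ Lset δ γ ∈ Ifam δ γ τ (fun β => S β ∩ Set.Iio δ) := by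
  rcases hB with ⟨α, hα, rfl⟩ | ⟨x, hx, rfl⟩ | ⟨z, -, rfl⟩
  · rw [Lbelow, ← sep_Lset_eq_inter h]
    exact IsBasic.mem_Ifam (Or.inl ⟨α, hα, rfl⟩)
  · by_cases hxδ : x ∈ Lset δ γ
    · rw [Jset, ← sep_Lset_eq_inter h]
      exact IsBasic.mem_Ifam (Or.inr (Or.inl ⟨x, (relevant_inter_Iio_iff h hxδ).2 hx, rfl⟩))
    · rw [Jset_inter_Lset_eq_empty hτ hx hxδ]
      exact empty_mem_Ifam
  · by_cases hzδ : z ∈ Lset δ γ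
    · rw [Set.inter_eq_self_of_subset_left (Set.singleton_subset_iff.2 hzδ)]
      exact IsBasic.mem_Ifam (Or.inr (Or.inr ⟨z, hzδ, rfl⟩))
    · rw [Set.singleton_inter_eq_empty.2 hzδ]
      exact empty_mem_Ifam

theorem inter_Lset_mem_Ifam (hτ : τ ≤ δ) (h : δ ≤ δ') {X : Set (List SOrd)}
    (hX : X ∈ Ifam δ' γ τ (fun β => S β ∩ Set.Iio δ')) :
    X ∩ Lset δ γ ∈ Ifam δ γ τ (fun β => S β ∩ Set.Iio δ) := by
  refine Ifam.induction_on hX (by simpa using empty_mem_Ifam)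
    (fun B hB => hB.inter_Lset_mem_Ifam hτ h) fun A B hA hB => ?_
  rw [Set.union_inter_distrib_right]
  exact union_mem_Ifam hA hB

theorem IsBasic.exists_lift (h : δ ≤ δ') {B : Set (List SOrd)}
    (hB : IsBasic δ γ τ (fun β => S β ∩ Set.Iio δ) B) :
    ∃ B', IsBasic δ' γ τ (fun β => S β ∩ Set.Iio δ') B' ∧ B = B' ∩ Lset δ γ ∧
      ∀ x ∈ Lset δ γ, B ⊆ Lx δ γ x → B' ⊆ Lx δ' γ x := by
  rcases hB with ⟨α, hα, rfl⟩ | ⟨y, hy, rfl⟩ | ⟨z, hz, rfl⟩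
  · refine ⟨Lbelow δ' γ α, Or.inl ⟨α, hα, rfl⟩, sep_Lset_eq_inter h _, fun x hx hsub => ?_⟩
    have hxα : ¬ Llt x [SOrd.pos α] := fun hxα => llt_irrefl x (hsub ⟨hx, hxα⟩).2
    exact fun z ⟨hz, hzα⟩ => ⟨hz, llt_of_llt_of_not_llt hzα hxα⟩
  · refine ⟨Jset δ' γ y, Or.inr (Or.inl ⟨y, (relevant_inter_Iio_iff h hy.1).1 hy, rfl⟩),
      sep_Lset_eq_inter h _, fun x hx hsub => ?_⟩
    -- the least element of `J_y` lies below `x`, so `x < y` would put `x` itself into `J_y`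
    have hxy : ¬ Llt x y := fun hxy =>
      llt_irrefl x (hsub ⟨hx, Or.inr (hsub hy.take_mem_Jset).2, hxy⟩).2
    exact fun z ⟨hz, _, hzy⟩ => ⟨hz, llt_of_llt_of_not_llt hzy hxy⟩
  · refine ⟨{z}, Or.inr (Or.inr ⟨z, Lset_mono h hz, rfl⟩),
      (Set.inter_eq_self_of_subset_left (Set.singleton_subset_iff.2 hz)).symm, fun x _ hsub => ?_⟩
    rintro _ rfl
    exact ⟨Lset_mono h hz, (hsub rfl).2⟩

theorem exists_lift_of_mem_Ifam (h : δ ≤ δ') {A : Set (List SOrd)}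
    (hA : A ∈ Ifam δ γ τ (fun β => S β ∩ Set.Iio δ)) :
    ∃ X ∈ Ifam δ' γ τ (fun β => S β ∩ Set.Iio δ'), A = X ∩ Lset δ γ ∧
      ∀ x ∈ Lset δ γ, A ⊆ Lx δ γ x → X ⊆ Lx δ' γ x := by
  refine Ifam.induction_on hA ⟨∅, empty_mem_Ifam, by simp, fun _ _ _ => Set.empty_subset _⟩
    (fun B hB => ?_) ?_
  · obtain ⟨B', hB', hBB', hsub⟩ := hB.exists_lift h
    exact ⟨B', hB'.mem_Ifam, hBB', hsub⟩
  · rintro _ _ ⟨X, hX, rfl, hXsub⟩ ⟨X', hX', rfl, hX'sub⟩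
    refine ⟨X ∪ X', union_mem_Ifam hX hX', (Set.union_inter_distrib_right _ _ _).symm,
      fun x hx hsub => Set.union_subset (hXsub x hx ?_) (hX'sub x hx ?_)⟩
    exacts [Set.subset_union_left.trans hsub, Set.subset_union_right.trans hsub]

end Restriction

theorem Ifam_restriction_general (θ μc lamC : Cardinal.{0})
    (S : Ordinal → Set Ordinal)
    (δ δ' : Ordinal) (h1 : θ.ord ≤ δ) (h2 : δ ≤ δ') :
    Ifam δ (lamC.ord * μc.ord) θ.ord (fun β => S β ∩ Set.Iio δ) =
      {Y | ∃ X ∈ Ifam δ' (lamC.ord * μc.ord) θ.ord (fun β => S β ∩ Set.Iio δ'),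
        Y = X ∩ Lset δ (lamC.ord * μc.ord)} ∧
    ∀ x ∈ Lset δ (lamC.ord * μc.ord),
      Ix δ (lamC.ord * μc.ord) θ.ord (fun β => S β ∩ Set.Iio δ) x =
        {Y | ∃ X ∈ Ix δ' (lamC.ord * μc.ord) θ.ord (fun β => S β ∩ Set.Iio δ') x,
          Y = X ∩ Lset δ (lamC.ord * μc.ord)} := by
  refine ⟨Set.ext fun A => ⟨fun hA => ?_, ?_⟩, fun x hx => Set.ext fun A => ⟨?_, ?_⟩⟩
  · obtain ⟨X, hX, rfl, -⟩ := exists_lift_of_mem_Ifam h2 hA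
    exact ⟨X, hX, rfl⟩
  · rintro ⟨X, hX, rfl⟩
    exact inter_Lset_mem_Ifam h1 h2 hX
  · rintro ⟨hAx, hA⟩
    obtain ⟨X, hX, rfl, hsub⟩ := exists_lift_of_mem_Ifam h2 hA
    exact ⟨X, ⟨hsub x hx hAx, hX⟩, rfl⟩
  · rintro ⟨X, ⟨hXx, hX⟩, rfl⟩
    exact ⟨fun z hz => ⟨hz.2, (hXx hz.1).2⟩, inter_Lset_mem_Ifam h1 h2 hX⟩

/-- Fix regular uncountable cardinals `θ < μ < λ` and a sequence
`Σ = ⟨S_β : β < θ⟩` of pairwise disjoint subsets of `λ*`, each co-initial in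
`λ*`, whose union is `λ*`. For `δ ≤ λ`, `L^δ := L^{δ,λ·μ}`,
`Σ_δ := ⟨S_β ∩ δ* : β < θ⟩` and `I^δ := I^{Σ_δ,λ·μ}`. Then for
`θ ≤ δ ≤ δ' ≤ λ`, `I^δ = {X ∩ L^δ : X ∈ I^{δ'}}`, and consequently
`I^δ_x = {X ∩ L^δ : X ∈ I^{δ'}_x}` for every `x ∈ L^δ`. -/
theorem Ifam_restriction (θ μc lamC : Cardinal.{0})
    (hθ : Cardinal.aleph0 < θ) (hθr : θ.IsRegular)
    (hμ : Cardinal.aleph0 < μc) (hμr : μc.IsRegular)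
    (hlam : Cardinal.aleph0 < lamC) (hlamr : lamC.IsRegular)
    (hθμ : θ < μc) (hmulam : μc < lamC)
    (S : Ordinal → Set Ordinal)
    (hsub : ∀ β, S β ⊆ Set.Iio lamC.ord)
    (hempty : ∀ β, θ.ord ≤ β → S β = ∅)
    (hdisj : ∀ β β', β ≠ β' → Disjoint (S β) (S β'))
    (hcoinit : ∀ β < θ.ord, ∀ η < lamC.ord, ∃ ξ ∈ S β, η ≤ ξ)
    (hcover : ∀ ξ < lamC.ord, ∃ β, ξ ∈ S β)
    (δ δ' : Ordinal) (h1 : θ.ord ≤ δ) (h2 : δ ≤ δ') (h3 : δ' ≤ lamC.ord) :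
    Ifam δ (lamC.ord * μc.ord) θ.ord (fun β => S β ∩ Set.Iio δ) =
      {Y | ∃ X ∈ Ifam δ' (lamC.ord * μc.ord) θ.ord (fun β => S β ∩ Set.Iio δ'),
        Y = X ∩ Lset δ (lamC.ord * μc.ord)} ∧
    ∀ x ∈ Lset δ (lamC.ord * μc.ord),
      Ix δ (lamC.ord * μc.ord) θ.ord (fun β => S β ∩ Set.Iio δ) x =
        {Y | ∃ X ∈ Ix δ' (lamC.ord * μc.ord) θ.ord (fun β => S β ∩ Set.Iio δ') x,
          Y = X ∩ Lset δ (lamC.ord * μc.ord)} :=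
  Ifam_restriction_general θ μc lamC S δ δ' h1 h2
end

section
/- Let θ be an infinite cardinal with θ^{<θ} = θ and let κ be a cardinal with κ < θ. Then for every coloring F : [θ⁺]² → κ of the two-element subsets of θ⁺ there exists a set H ⊆ θ⁺ of cardinality θ that is homogeneous for F, i.e., F is constant on [H]². -/
/-!
Fix a well-order `ι`. For each point `x`, build by recursion along `ι` a branch `b` of `x`:
`b i` is some `y` that differs from every earlier `b j` and is coloured against it as `x` is,
`F s(b j, y) = F s(b j, x)`. By induction, the branch of `x` up to stage `i` depends only on the
colours `F s(b j, x)` for `j < i`; hence the points that eventually occur on their own branch are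
coded by a stage `i` together with a map `Iio i → K`. For `ι = θ` there are at most
`θ · θ^{<θ} = θ < θ⁺` such codes, so some `x` never occurs on its branch. That branch then runs
through all of `θ`, is injective, and is end-homogeneous: `F s(b j, b i) = F s(b j, x)` for `j < i`.
Finally `θ^{<θ} = θ` forces `θ` to be regular (otherwise `θ < θ ^ cf θ`), so pigeonholing the
`κ < θ` colours `F s(b j, x)` leaves `θ` branch points of one colour, a homogeneous set.
-/

open Cardinal Set Function
open scoped Ordinal

universe u

theorem Cardinal.isRegular_of_powerlt_eq_self {θ : Cardinal} (hθ : ℵ₀ ≤ θ) (hpow : θ ^< θ = θ) :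
    θ.IsRegular :=
  ⟨hθ, not_lt.mp fun hcof =>
    ((lt_power_cof_ord hθ).trans_le ((le_powerlt θ hcof).trans hpow.le)).false⟩

theorem Cardinal.mk_sigma_Iio_fun_le {ι K : Type u} [LinearOrder ι] [WellFoundedLT ι]
    (hι : (#ι).ord = typeLT ι) (hℵ : ℵ₀ ≤ #ι) (hpow : #ι ^< #ι = #ι) (hK : #K ≤ #ι) :
    #(Σ i : ι, Iio i → K) ≤ #ι := by
  rw [mk_sigma]
  calc sum (fun i : ι => #(Iio i → K)) ≤ sum fun _ : ι => #ι :=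
        sum_le_sum _ _ fun i => by
          rw [← power_def]
          calc #K ^ #(Iio i) ≤ #ι ^ #(Iio i) := power_le_power_right hK
            _ ≤ #ι ^< #ι := le_powerlt _ (mk_Iio_lt i hι)
            _ = #ι := hpow
    _ = #ι := by rw [sum_const', mul_eq_self hℵ]

namespace ErdosRado

variable {α ι K : Type u}

def IsEndHomogeneous [LT ι] (F : Sym2 α → K) (f : ι → α) : Prop :=
  ∃ c : ι → K, ∀ i j, i < j → F s(f i, f j) = c i

theorem IsEndHomogeneous.exists_homogeneous [LinearOrder ι] {F : Sym2 α → K} {f : ι → α}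
    (hF : IsEndHomogeneous F f) (hf : Injective f) (hι : ℵ₀ ≤ #ι) (hK : #K < (#ι).ord.cof) :
    ∃ H : Set α, #H = #ι ∧ ∃ k : K, ∀ a ∈ H, ∀ b ∈ H, a ≠ b → F s(a, b) = k := by
  obtain ⟨c, hc⟩ := hF
  obtain ⟨k, hk⟩ := infinite_pigeonhole c hι hK
  refine ⟨f '' (c ⁻¹' {k}), (mk_image_eq hf).trans hk, k, ?_⟩
  rintro _ ⟨i, hi, rfl⟩ _ ⟨j, hj, rfl⟩ hij
  rcases lt_or_gt_of_ne (ne_of_apply_ne f hij) with h | h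
  · exact (hc i j h).trans hi
  · rw [Sym2.eq_swap]
    exact (hc j i h).trans hj

section Branch

variable [LinearOrder ι] [WellFoundedLT ι] [Nonempty α] (F : Sym2 α → K)

-- Once no candidate is left, `Classical.epsilon` returns an arbitrary point.
noncomputable def branch (x : α) : ι → α :=
  wellFounded_lt.fix fun i b =>
    Classical.epsilon fun y => ∀ j (hj : j < i), y ≠ b j hj ∧ F s(b j hj, y) = F s(b j hj, x)

def candidates (x : α) (i : ι) : Set α :=
  {y | ∀ j < i, y ≠ branch F x j ∧ F s(branch F x j, y) = F s(branch F x j, x)}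

variable {F}

theorem branch_eq_epsilon (x : α) (i : ι) :
    branch F x i = Classical.epsilon (· ∈ candidates F x i) := by
  rw [branch, WellFounded.fix_eq]
  rfl

theorem branch_mem_candidates {x : α} {i : ι} (h : (candidates F x i).Nonempty) :
    branch F x i ∈ candidates F x i :=
  branch_eq_epsilon x i ▸ Classical.epsilon_spec h

theorem branch_eq_branch {x x' : α} {i : ι}
    (h : ∀ j < i, F s(branch F x j, x) = F s(branch F x' j, x')) :
    branch F x i = branch F x' i := by
  induction i using WellFoundedLT.induction with
  | _ i ih =>
  have hb : ∀ j < i, branch F x j = branch F x' j :=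
    fun j hj => ih j hj fun k hk => h k (hk.trans hj)
  have hcand : candidates F x i = candidates F x' i := by
    ext y
    exact forall₂_congr fun j hj => by rw [h j hj, hb j hj]
  rw [branch_eq_epsilon, branch_eq_epsilon, hcand]

theorem mk_le_of_forall_mem_range_branch (hF : ∀ x : α, x ∈ range (branch F x : ι → α)) :
    #α ≤ #(Σ i : ι, Iio i → K) := by
  choose i hi using hF
  refine mk_le_of_injective (f := fun x => ⟨i x, fun j => F s(branch F x j.1, x)⟩)
    fun x x' hxx' => ?_
  have hcode : ∀ (a a' : ι) (f : Iio a → K) (f' : Iio a' → K),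
      (⟨a, f⟩ : Σ i : ι, Iio i → K) = ⟨a', f'⟩ → a = a' ∧ ∀ j (hj : j < a) (hj' : j < a'),
        f ⟨j, hj⟩ = f' ⟨j, hj'⟩ := by
    rintro a _ f _ ⟨⟩
    exact ⟨rfl, fun _ _ _ => rfl⟩
  obtain ⟨hii', hcol⟩ := hcode _ _ _ _ hxx'
  calc x = branch F x (i x) := (hi x).symm
    _ = branch F x' (i x) := branch_eq_branch fun j hj => hcol j hj (hii' ▸ hj)
    _ = x' := hii' ▸ hi x'

theorem exists_notMem_range_branch (h : #(Σ i : ι, Iio i → K) < #α) :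
    ∃ x : α, x ∉ range (branch F x : ι → α) := by
  by_contra! hF
  exact (mk_le_of_forall_mem_range_branch hF).not_gt h

theorem branch_mem_candidates_of_notMem_range {x : α} (hx : x ∉ range (branch F x : ι → α))
    (i : ι) : branch F x i ∈ candidates F x i :=
  branch_mem_candidates ⟨x, fun j _ => ⟨fun h => hx ⟨j, h.symm⟩, rfl⟩⟩

end Branch

theorem exists_injective_isEndHomogeneous [LinearOrder ι] [WellFoundedLT ι] (F : Sym2 α → K)
    (h : #(Σ i : ι, Iio i → K) < #α) :
    ∃ f : ι → α, Injective f ∧ IsEndHomogeneous F f := by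
  have : Nonempty α := mk_ne_zero_iff.mp (zero_le.trans_lt h).ne'
  obtain ⟨x, hx⟩ := exists_notMem_range_branch (F := F) h
  have hmem := branch_mem_candidates_of_notMem_range hx
  refine ⟨branch F x, fun i j hij => ?_, fun j => F s(branch F x j, x),
    fun j i hji => (hmem i j hji).2⟩
  by_contra hne
  rcases lt_or_gt_of_ne hne with h | h
  · exact (hmem j i h).1 hij.symm
  · exact (hmem i j h).1 hij

end ErdosRado

/-- If `θ` is an infinite cardinal with `θ^{<θ} = θ` and `κ < θ`, then every
coloring `F : [θ⁺]² → κ` of the two-element subsets of `θ⁺` has a homogeneous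
set of cardinality `θ`. -/
theorem exists_homogeneous_of_powerlt_eq {α K : Type u} (θ κ : Cardinal.{u})
    (hθ : Cardinal.aleph0 ≤ θ) (hpow : θ ^< θ = θ) (hκ : κ < θ)
    (hα : Cardinal.mk α = Order.succ θ) (hK : Cardinal.mk K = κ)
    (F : Sym2 α → K) :
    ∃ H : Set α, Cardinal.mk H = θ ∧
      ∃ c : K, ∀ a ∈ H, ∀ b ∈ H, a ≠ b → F s(a, b) = c := by
  have hι : #θ.ord.ToType = θ := mk_ord_toType θ
  subst hK
  rw [← hι] at hθ hpow hκ hα ⊢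
  obtain ⟨f, hf, hF⟩ := ErdosRado.exists_injective_isEndHomogeneous F <|
    (mk_sigma_Iio_fun_le (by simp) hθ hpow hκ.le).trans_lt (hα ▸ Order.lt_succ _)
  refine hF.exists_homogeneous hf hθ ?_
  rwa [(isRegular_of_powerlt_eq_self hθ hpow).cof_ord]
end

section
/- Let ⟨L, ⟨I_x⟩_{x∈L}⟩ be an indexed template. Then for every subset A ⊆ L, the pair ⟨A, ⟨I_x↾A⟩_{x∈A}⟩ is again an indexed template (where A carries the order inherited from L); in particular the family I(A) := ⋃_{x∈A}(I_x↾A) ∪ {A} is well-founded by the strict subset relation. -/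
/-
The first five axioms pass to traces pointwise, since `X ↦ A ∩ X` preserves `∅`, unions,
intersections and membership of points of `A`. For well-foundedness, the only issue is that
`X ↦ A ∩ X` is not strictly monotone. But `⋃ₓ I_x` is closed under binary intersections (put
both sets into `I_(max x y)`), and a strict descent `A ∩ Y ⊊ A ∩ X` of traces lifts to the strict
descent `X ∩ Y ⊊ X` in that family, with the same trace `A ∩ (X ∩ Y) = A ∩ Y`.
-/

/-- `⟨A, ⟨I_x ↾ A⟩_{x ∈ A}⟩` is an indexed template: each `I x` (for `x ∈ A`)
is a family of subsets of `{z ∈ A : z < x}` containing `∅`, closed under finite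
unions and intersections, covering `{z ∈ A : z < x}`, monotone in `x`, and such
that `⋃_{x ∈ A} I x ∪ {A}` is well-founded by `⊊`. -/
def IsIndexedTemplateOn {L : Type*} [LinearOrder L] (A : Set L)
    (I : L → Set (Set L)) : Prop :=
  (∀ x ∈ A, ∀ X ∈ I x, X ⊆ {z ∈ A | z < x}) ∧
  (∀ x ∈ A, ∅ ∈ I x) ∧
  (∀ x ∈ A, ∀ X ∈ I x, ∀ Y ∈ I x, X ∪ Y ∈ I x ∧ X ∩ Y ∈ I x) ∧
  (∀ x ∈ A, ∀ z ∈ A, z < x → ∃ X ∈ I x, z ∈ X) ∧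
  (∀ x ∈ A, ∀ y ∈ A, x < y → I x ⊆ I y) ∧
  Set.WellFoundedOn ({B | ∃ x ∈ A, B ∈ I x} ∪ {A}) (· ⊂ ·)

open Set

theorem Set.WellFoundedOn.image_inter {α : Type*} {F : Set (Set α)}
    (hF : ∀ X ∈ F, ∀ Y ∈ F, X ∩ Y ∈ F) (hwf : F.WellFoundedOn (· ⊂ ·)) (A : Set α) :
    ((A ∩ ·) '' F).WellFoundedOn (· ⊂ ·) := by
  rw [wellFoundedOn_iff]
  refine ⟨fun B => ?_⟩
  by_cases hB : B ∈ (A ∩ ·) '' F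
  swap
  · exact ⟨_, fun C hC => absurd hC.2.2 hB⟩
  obtain ⟨X, hX, rfl⟩ := hB
  refine hwf.induction (P := fun X => Acc _ (A ∩ X)) hX fun X hX ih => ⟨_, ?_⟩
  rintro _ ⟨hYX, ⟨Y, hY, rfl⟩, -⟩
  change A ∩ Y ⊂ A ∩ X at hYX
  change Acc _ (A ∩ Y)
  have hXY : X ∩ Y ⊂ X := by
    refine inter_subset_left.ssubset_of_ne fun hXY => hYX.not_subset ?_
    rw [← hXY]
    exact inter_subset_inter_right A inter_subset_right
  have htrace : A ∩ (X ∩ Y) = A ∩ Y := by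
    rw [inter_left_comm, inter_eq_right.mpr (hYX.subset.trans inter_subset_right)]
  exact htrace ▸ ih _ (hF X hX Y hY) hXY

namespace IsIndexedTemplateOn

variable {L : Type*} [LinearOrder L] {I : L → Set (Set L)}

theorem inter_mem_iUnion (hI : IsIndexedTemplateOn univ I) {X Y : Set L}
    (hX : X ∈ ⋃ x, I x) (hY : Y ∈ ⋃ y, I y) : X ∩ Y ∈ ⋃ z, I z := by
  obtain ⟨-, -, hclose, -, hmono, -⟩ := hI
  have hI_mono : Monotone I := fun x y hxy =>
    hxy.eq_or_lt.elim (fun h => h ▸ le_rfl) (hmono x trivial y trivial)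
  obtain ⟨x, hX⟩ := mem_iUnion.mp hX
  obtain ⟨y, hY⟩ := mem_iUnion.mp hY
  exact mem_iUnion.mpr ⟨max x y,
    (hclose _ trivial X (hI_mono le_sup_left hX) Y (hI_mono le_sup_right hY)).2⟩

theorem wellFoundedOn_iUnion (hI : IsIndexedTemplateOn univ I) :
    (⋃ x, I x).WellFoundedOn (· ⊂ ·) :=
  hI.2.2.2.2.2.subset fun X hX => Or.inl (by simpa using hX)

end IsIndexedTemplateOn

/-- If `⟨L, ⟨I_x⟩_{x∈L}⟩` is an indexed template then, for every `A ⊆ L`,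
the pair `⟨A, ⟨I_x ↾ A⟩_{x∈A}⟩` (with the traces `I_x ↾ A = {A ∩ X : X ∈ I_x}`)
is again an indexed template; in particular
`I(A) = ⋃_{x∈A}(I_x ↾ A) ∪ {A}` is well-founded by `⊊`. -/
theorem isIndexedTemplateOn_restrict {L : Type*} [LinearOrder L]
    (I : L → Set (Set L)) (hI : IsIndexedTemplateOn Set.univ I) (A : Set L) :
    IsIndexedTemplateOn A (fun x => {B | ∃ X ∈ I x, B = A ∩ X}) := by
  have hwf : ((A ∩ ·) '' ⋃ x, I x).WellFoundedOn (· ⊂ ·) :=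
    hI.wellFoundedOn_iUnion.image_inter (fun _ hX _ hY => hI.inter_mem_iUnion hX hY) A
  obtain ⟨hsub, hempty, hclose, hcover, hmono, -⟩ := hI
  refine ⟨?_, fun x _ => ⟨∅, hempty x trivial, (inter_empty A).symm⟩, ?_, ?_, ?_, ?_⟩
  · rintro x - _ ⟨X, hX, rfl⟩ z ⟨hzA, hzX⟩
    exact ⟨hzA, (hsub x trivial X hX hzX).2⟩
  · rintro x - _ ⟨X, hX, rfl⟩ _ ⟨Y, hY, rfl⟩
    exact ⟨⟨X ∪ Y, (hclose x trivial X hX Y hY).1, (inter_union_distrib_left A X Y).symm⟩,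
      ⟨X ∩ Y, (hclose x trivial X hX Y hY).2, (inter_inter_distrib_left A X Y).symm⟩⟩
  · intro x _ z hz hzx
    obtain ⟨X, hX, hzX⟩ := hcover x trivial z trivial hzx
    exact ⟨A ∩ X, ⟨X, hX, rfl⟩, hz, hzX⟩
  · rintro x - y - hxy _ ⟨X, hX, rfl⟩
    exact ⟨X, hmono x trivial y trivial hxy hX, rfl⟩
  · refine (hwf.subset ?_).union wellFoundedOn_singleton
    rintro _ ⟨x, -, X, hX, rfl⟩
    exact ⟨X, mem_iUnion_of_mem x hX, rfl⟩
end

section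
/- Let ⟨L, ⟨I_x⟩_{x∈L}⟩ be an indexed template, and for X ⊆ L let Dp(X) denote the ordinal rank of X as an element of the well-founded partial order (I(X), ⊊). Then for every A ⊆ L: (a) if Y ∈ I(A), then Dp(Y) ≤ rank_{I(A)}(Y), the rank of Y in (I(A), ⊊); (b) if X ⊆ A then Dp(X) ≤ Dp(A); and (c) if x ∈ A, Y is a proper subset of A ∩ (L_x ∪ {x}), and Y ∩ L_x ∈ I_x↾A, then Dp(Y) < Dp(A); in particular Dp(X) < Dp(A) for every X ∈ I_x↾A. -/
/-- `I(X) = ⋃_{x ∈ X} (I_x ↾ X) ∪ {X}`. -/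
def templateTrace {L : Type*} (I : L → Set (Set L)) (X : Set L) : Set (Set L) :=
  {B | ∃ x ∈ X, ∃ Y ∈ I x, B = X ∩ Y} ∪ {X}

theorem self_mem_templateTrace {L : Type*} (I : L → Set (Set L)) (X : Set L) :
    X ∈ templateTrace I X :=
  Or.inr rfl

/-- `Dp(X)`: the rank of `X` in the well-founded partial order `(I(X), ⊊)`. -/
noncomputable def Dp {L : Type*} [LinearOrder L] (I : L → Set (Set L))
    (hwf : ∀ X : Set L, (templateTrace I X).WellFoundedOn (· ⊂ ·))
    (X : Set L) : Ordinal :=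
  Acc.rank ((hwf X).apply (⟨X, self_mem_templateTrace I X⟩ : templateTrace I X))

/-! For `Y ∈ I(A)` we have `I(Y) ⊆ I(A)`, and ranks only grow in a larger family; this gives (a).
Monotonicity of `Dp` comes from simulating strictly descending chains of `I(X)` in `I(A)` when
`X ⊆ A`: every member of `I(X)` is `X ∩ Z` with `Z ∈ I_u` for some `u ∈ X` or `Z = L`, such `Z` are
closed under intersection, and `X ∩ W ⊊ X ∩ Z ⊆ Z` forces `A ∩ (W ∩ Z) ⊊ A ∩ Z`.
For (c) with `x ∈ Y`, `Y` misses some `w < x` of `A`; enlarging `Z` by a member of `I_x` containing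
`w` gives an element of `I(A)` strictly between `A ∩ Z` and `A` that dominates, through this
simulation, every proper member of `I(Y)`. -/

universe u

namespace Acc

variable {α β : Type u} {r : α → α → Prop} {s : β → β → Prop}

theorem rank_le_rank_of_forall_exists {a : α} {b : β} (ha : Acc r a) (hb : Acc s b)
    (H : ∀ a' (ha' : r a' a), ∃ b', ∃ hb' : s b' b, (ha.inv ha').rank ≤ (hb.inv hb').rank) :
    ha.rank ≤ hb.rank := by
  rw [ha.rank_eq]
  refine Ordinal.iSup_le fun ⟨a', ha'⟩ => ?_
  obtain ⟨b', hb', hle⟩ := H a' ha'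
  exact Order.succ_le_of_lt (hle.trans_lt (hb.rank_lt_of_rel hb'))

theorem rank_le_rank_of_simulation (R : α → β → Prop)
    (hR : ∀ a b a', R a b → r a' a → ∃ b', s b' b ∧ R a' b')
    {a : α} {b : β} (ha : Acc r a) (hb : Acc s b) (hab : R a b) : ha.rank ≤ hb.rank := by
  induction hb generalizing a with
  | intro b hb ih =>
    refine rank_le_rank_of_forall_exists ha _ fun a' ha' => ?_
    obtain ⟨b', hb', hR'⟩ := hR a b a' hab ha'
    exact ⟨b', hb', ih b' hb' _ hR'⟩

end Acc

theorem Set.WellFoundedOn.rank_le_of_subset {α : Type u} {r : α → α → Prop} {s t : Set α}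
    (hs : s.WellFoundedOn r) (ht : t.WellFoundedOn r) (hst : s ⊆ t) (a : s) :
    (hs.apply a).rank ≤ (ht.apply ⟨a, hst a.2⟩).rank :=
  Acc.rank_le_rank_of_simulation (fun (a : s) (b : t) => (a : α) = b)
    (fun _ b a' hab h => ⟨⟨a', hst a'.2⟩, show r a' b from hab ▸ h, rfl⟩) _ _ rfl

theorem Set.WellFoundedOn.rank_lt_of_rel {α : Type u} {r : α → α → Prop} {s : Set α}
    (hs : s.WellFoundedOn r) {a b : α} (ha : a ∈ s) (hb : b ∈ s) (h : r a b) :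
    (hs.apply ⟨a, ha⟩).rank < (hs.apply ⟨b, hb⟩).rank :=
  Acc.rank_lt_of_rel (hs.apply ⟨b, hb⟩) (show Subrel r (· ∈ s) ⟨a, ha⟩ ⟨b, hb⟩ from h)

variable {L : Type u} {I : L → Set (Set L)}

def traceIndex (I : L → Set (Set L)) (X : Set L) : Set (Set L) :=
  insert Set.univ {Z | ∃ x ∈ X, Z ∈ I x}

theorem mem_templateTrace_iff {X B : Set L} :
    B ∈ templateTrace I X ↔ ∃ Z ∈ traceIndex I X, B = X ∩ Z := by
  simp only [templateTrace, traceIndex, Set.mem_union, Set.mem_singleton_iff,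
    Set.mem_insert_iff]
  constructor
  · rintro (⟨x, hx, Z, hZ, rfl⟩ | rfl)
    exacts [⟨Z, Or.inr ⟨x, hx, hZ⟩, rfl⟩, ⟨Set.univ, Or.inl rfl, (Set.inter_univ _).symm⟩]
  · rintro ⟨Z, rfl | ⟨x, hx, hZ⟩, rfl⟩
    exacts [Or.inr (Set.inter_univ _), Or.inl ⟨x, hx, Z, hZ, rfl⟩]

theorem inter_mem_templateTrace {X Z : Set L} (hZ : Z ∈ traceIndex I X) :
    X ∩ Z ∈ templateTrace I X :=
  mem_templateTrace_iff.2 ⟨Z, hZ, rfl⟩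

theorem mem_traceIndex_of_mem {X Z : Set L} {x : L} (hx : x ∈ X) (hZ : Z ∈ I x) :
    Z ∈ traceIndex I X :=
  Or.inr ⟨x, hx, hZ⟩

theorem traceIndex_mono {X A : Set L} (h : X ⊆ A) : traceIndex I X ⊆ traceIndex I A :=
  Set.insert_subset_insert fun _ ⟨x, hx, hZ⟩ => ⟨x, h hx, hZ⟩

variable [LinearOrder L]

namespace IsIndexedTemplateOn

variable (htemp : IsIndexedTemplateOn Set.univ I)
include htemp

theorem lt_of_mem {x z : L} {Z : Set L} (hZ : Z ∈ I x) (hz : z ∈ Z) : z < x :=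
  (htemp.1 x trivial Z hZ hz).2

theorem mono {x y : L} (h : y ≤ x) : I y ⊆ I x :=
  h.lt_or_eq.elim (htemp.2.2.2.2.1 y trivial x trivial) fun h => h ▸ le_rfl

theorem union_mem {x : L} {W Z : Set L} (hW : W ∈ I x) (hZ : Z ∈ I x) : W ∪ Z ∈ I x :=
  (htemp.2.2.1 x trivial W hW Z hZ).1

theorem inter_mem {x : L} {W Z : Set L} (hW : W ∈ I x) (hZ : Z ∈ I x) : W ∩ Z ∈ I x :=
  (htemp.2.2.1 x trivial W hW Z hZ).2

theorem exists_mem {x z : L} (h : z < x) : ∃ V ∈ I x, z ∈ V :=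
  htemp.2.2.2.1 x trivial z trivial h

theorem inter_ssubset {A Z : Set L} {x : L} (hx : x ∈ A) (hZ : Z ∈ I x) : A ∩ Z ⊂ A :=
  ssubset_of_subset_not_superset Set.inter_subset_left fun h =>
    (htemp.lt_of_mem hZ (h hx).2).false

end IsIndexedTemplateOn

theorem inter_mem_traceIndex (htemp : IsIndexedTemplateOn Set.univ I) {X W Z : Set L}
    (hW : W ∈ traceIndex I X) (hZ : Z ∈ traceIndex I X) : W ∩ Z ∈ traceIndex I X := by
  rcases hW with rfl | ⟨y, hy, hW⟩
  · rwa [Set.univ_inter]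
  rcases hZ with rfl | ⟨x, hx, hZ⟩
  · rw [Set.inter_univ]; exact mem_traceIndex_of_mem hy hW
  exact mem_traceIndex_of_mem (max_rec' (· ∈ X) hy hx)
    (htemp.inter_mem (htemp.mono (le_max_left y x) hW) (htemp.mono (le_max_right y x) hZ))

theorem templateTrace_subset_of_mem (htemp : IsIndexedTemplateOn Set.univ I) {A Y : Set L}
    (hY : Y ∈ templateTrace I A) : templateTrace I Y ⊆ templateTrace I A := by
  obtain ⟨Z, hZ, rfl⟩ := mem_templateTrace_iff.1 hY
  intro B hB
  obtain ⟨W, hW, rfl⟩ := mem_templateTrace_iff.1 hB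
  rw [Set.inter_assoc]
  exact inter_mem_templateTrace
    (inter_mem_traceIndex htemp hZ (traceIndex_mono Set.inter_subset_left hW))

section Dp

variable (htemp : IsIndexedTemplateOn Set.univ I)
  (hwf : ∀ X : Set L, (templateTrace I X).WellFoundedOn (· ⊂ ·))
include htemp

theorem Dp_le_rank {A Y : Set L} (hY : Y ∈ templateTrace I A) :
    Dp I hwf Y ≤ ((hwf A).apply ⟨Y, hY⟩).rank :=
  (hwf Y).rank_le_of_subset (hwf A) (templateTrace_subset_of_mem htemp hY)
    ⟨Y, self_mem_templateTrace I Y⟩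

theorem Dp_inter_lt {A Z : Set L} {x : L} (hx : x ∈ A) (hZ : Z ∈ I x) :
    Dp I hwf (A ∩ Z) < Dp I hwf A :=
  (Dp_le_rank htemp hwf (inter_mem_templateTrace (mem_traceIndex_of_mem hx hZ))).trans_lt
    ((hwf A).rank_lt_of_rel _ _ (htemp.inter_ssubset hx hZ))

theorem templateTrace_rank_le_of_subset {X A Z : Set L} (hXA : X ⊆ A) (hZ : Z ∈ traceIndex I X)
    (C : templateTrace I X) (D : templateTrace I A) (hC : C.1 = X ∩ Z) (hD : D.1 = A ∩ Z) :
    ((hwf X).apply C).rank ≤ ((hwf A).apply D).rank := by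
  refine Acc.rank_le_rank_of_simulation
    (fun C D => ∃ Z ∈ traceIndex I X, C.1 = X ∩ Z ∧ D.1 = A ∩ Z) ?_ _ _ ⟨Z, hZ, hC, hD⟩
  rintro C D ⟨_, hC'⟩ ⟨Z, hZ, hC, hD⟩ (hlt : _ ⊂ C.1)
  obtain ⟨W, hW, rfl⟩ := mem_templateTrace_iff.1 hC'
  have hWZ : W ∩ Z ∈ traceIndex I X := inter_mem_traceIndex htemp hW hZ
  refine ⟨⟨A ∩ (W ∩ Z), inter_mem_templateTrace (traceIndex_mono hXA hWZ)⟩, ?_, W ∩ Z, hWZ, ?_, rfl⟩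
  · obtain ⟨z, hzC, hzW⟩ := Set.exists_of_ssubset hlt
    rw [hC] at hzC
    show A ∩ (W ∩ Z) ⊂ D.1
    rw [hD]
    exact ssubset_of_subset_not_superset
      (Set.inter_subset_inter_right _ Set.inter_subset_right)
      fun h => hzW ⟨hzC.1, (h ⟨hXA hzC.1, hzC.2⟩).2.1⟩
  · have hXWZ : X ∩ W ⊆ Z := fun z hz => (hC ▸ hlt.subset hz).2
    rw [← Set.inter_assoc, Set.inter_eq_left.2 hXWZ]

theorem Dp_mono {X A : Set L} (hXA : X ⊆ A) : Dp I hwf X ≤ Dp I hwf A :=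
  templateTrace_rank_le_of_subset htemp hwf hXA (Set.mem_insert _ _) _ _
    (Set.inter_univ X).symm (Set.inter_univ A).symm

theorem Dp_le_rank_of_ssubset {A Y Z D : Set L} {x : L} (hYA : Y ⊆ A) (hxY : x ∈ Y)
    (hY : ∀ y ∈ Y, y ≤ x) (hZ : Z ∈ I x) (hYZ : Y ∩ {z | z < x} ⊆ Z)
    (hD : D ∈ templateTrace I A) (hZD : A ∩ Z ⊂ D) :
    Dp I hwf Y ≤ ((hwf A).apply ⟨D, hD⟩).rank := by
  refine Acc.rank_le_rank_of_forall_exists _ _ ?_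
  rintro ⟨B, hB⟩ (hBY : B ⊂ Y)
  obtain ⟨W, hW, rfl⟩ := mem_templateTrace_iff.1 hB
  obtain rfl | ⟨y, hy, hW⟩ := hW
  · exact absurd (Set.inter_univ Y) hBY.ne
  have hWx : W ∈ I x := htemp.mono (hY y hy) hW
  have hWZ : W ∩ Z ∈ I x := htemp.inter_mem hWx hZ
  have hYW : Y ∩ W ⊆ Z := fun z hz => hYZ ⟨hz.1, htemp.lt_of_mem hWx hz.2⟩
  refine ⟨⟨A ∩ (W ∩ Z), inter_mem_templateTrace (mem_traceIndex_of_mem (hYA hxY) hWZ)⟩,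
    lt_of_le_of_lt (Set.inter_subset_inter_right _ Set.inter_subset_right) hZD, ?_⟩
  exact templateTrace_rank_le_of_subset htemp hwf hYA (mem_traceIndex_of_mem hxY hWZ) _ _
    (by rw [← Set.inter_assoc, Set.inter_eq_left.2 hYW]) rfl

theorem Dp_lt_of_ssubset {A Y Z : Set L} {x : L} (hx : x ∈ A)
    (hY : Y ⊂ A ∩ ({z | z < x} ∪ {x})) (hZ : Z ∈ I x) (hYZ : Y ∩ {z | z < x} = A ∩ Z) :
    Dp I hwf Y < Dp I hwf A := by
  have hYA : Y ⊆ A := hY.subset.trans Set.inter_subset_left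
  by_cases hxY : x ∈ Y
  · obtain ⟨w, ⟨hwA, hw⟩, hwY⟩ := Set.exists_of_ssubset hY
    have hwx : w < x := hw.resolve_right fun h => hwY (h ▸ hxY)
    have hwZ : w ∉ Z := fun h => hwY (hYZ.symm ▸ ⟨hwA, h⟩ : w ∈ Y ∩ {z | z < x}).1
    obtain ⟨V, hV, hwV⟩ := htemp.exists_mem hwx
    have hZV : Z ∪ V ∈ I x := htemp.union_mem hZ hV
    have hlt : A ∩ Z ⊂ A ∩ (Z ∪ V) :=
      ssubset_of_subset_not_superset (Set.inter_subset_inter_right _ Set.subset_union_left)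
        fun h => hwZ (h ⟨hwA, Or.inr hwV⟩).2
    have hY_le : ∀ y ∈ Y, y ≤ x := fun y hy => (hY.subset hy).2.elim le_of_lt le_of_eq
    calc Dp I hwf Y ≤ _ := Dp_le_rank_of_ssubset htemp hwf hYA hxY hY_le hZ
            (hYZ.subset.trans Set.inter_subset_right)
            (inter_mem_templateTrace (mem_traceIndex_of_mem hx hZV)) hlt
      _ < Dp I hwf A := (hwf A).rank_lt_of_rel _ _ (htemp.inter_ssubset hx hZV)
  · have hYeq : Y = A ∩ Z := by
      refine hYZ ▸ (Set.inter_eq_left.2 fun y hy => ?_).symm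
      exact (hY.subset hy).2.resolve_right fun h => hxY (h ▸ hy)
    exact hYeq ▸ Dp_inter_lt htemp hwf hx hZ

end Dp

/-- Properties of `Dp`: (a) if `Y ∈ I(A)` then `Dp(Y) ≤ rank_{I(A)}(Y)`;
(b) if `X ⊆ A` then `Dp(X) ≤ Dp(A)`; (c) if `x ∈ A`, `Y ⊊ A ∩ (L_x ∪ {x})` and
`Y ∩ L_x ∈ I_x ↾ A`, then `Dp(Y) < Dp(A)`; in particular `Dp(X) < Dp(A)` for
every `X ∈ I_x ↾ A`. -/
theorem Dp_properties {L : Type*} [LinearOrder L] (I : L → Set (Set L))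
    (htemp : IsIndexedTemplateOn Set.univ I)
    (hwf : ∀ X : Set L, (templateTrace I X).WellFoundedOn (· ⊂ ·)) :
    (∀ A Y : Set L, ∀ hY : Y ∈ templateTrace I A,
        Dp I hwf Y ≤ Acc.rank ((hwf A).apply (⟨Y, hY⟩ : templateTrace I A))) ∧
    (∀ A X : Set L, X ⊆ A → Dp I hwf X ≤ Dp I hwf A) ∧
    (∀ A : Set L, ∀ x ∈ A, ∀ Y : Set L,
        Y ⊂ A ∩ ({z | z < x} ∪ {x}) →
        (∃ Z ∈ I x, Y ∩ {z | z < x} = A ∩ Z) →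
        Dp I hwf Y < Dp I hwf A) ∧
    (∀ A : Set L, ∀ x ∈ A, ∀ Z ∈ I x, Dp I hwf (A ∩ Z) < Dp I hwf A) :=
  ⟨fun _ _ => Dp_le_rank htemp hwf, fun _ _ => Dp_mono htemp hwf,
    fun _ _ hx _ hY ⟨_, hZ, hYZ⟩ => Dp_lt_of_ssubset htemp hwf hx hY hZ hYZ,
    fun _ _ hx _ => Dp_inter_lt htemp hwf hx⟩
end

section
/- cov(N) ≤ 𝔟_⋔ ≤ non(M): every family F ⊆ 2^ω of cardinality less than cov(N) is ⋔-bounded (there is g ∈ 2^ω with f ⋔ g for all f ∈ F), and every non-meager subset of 2^ω is a ⋔-unbounded family. -/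
open MeasureTheory

def seg (k : ℕ) : Finset ℕ := Finset.Ico (2 ^ (k + 1) - 2) (2 ^ (k + 2) - 2)

def eqSeg (f g : ℕ → Bool) (k : ℕ) : Prop := ∀ i ∈ seg k, f i = g i

/-- `f ⋔ g`: `f ↾ I_k ≠ g ↾ I_k` for all but finitely many `k`. -/
def pfork (f g : ℕ → Bool) : Prop := ∃ n : ℕ, ∀ k, n ≤ k → ¬ eqSeg f g k

/-- `μ` is the uniform product (Haar) probability measure on `2^ω`. -/
def IsUniformProductMeasure (μ : Measure (ℕ → Bool)) : Prop :=
  IsProbabilityMeasure μ ∧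
  ∀ (s : Finset ℕ) (σ : ℕ → Bool),
    μ {f : ℕ → Bool | ∀ i ∈ s, f i = σ i} = (2 : ENNReal)⁻¹ ^ s.card

/-- `cov(N)`: the least number of null sets covering `2^ω`. -/
noncomputable def covNull (μ : Measure (ℕ → Bool)) : Cardinal :=
  sInf {c : Cardinal | ∃ 𝒞 : Set (Set (ℕ → Bool)), Cardinal.mk 𝒞 = c ∧
    (∀ A ∈ 𝒞, μ A = 0) ∧ ⋃₀ 𝒞 = Set.univ}

/-- `𝔟_⋔`: the least size of a `⋔`-unbounded family in `2^ω`. -/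
noncomputable def bPfork : Cardinal :=
  sInf {c : Cardinal | ∃ F : Set (ℕ → Bool), Cardinal.mk F = c ∧
    ¬ ∃ g : ℕ → Bool, ∀ f ∈ F, pfork f g}

/-- `non(M)`: the least size of a non-meager subset of `2^ω`. -/
noncomputable def nonMeagre : Cardinal :=
  sInf {c : Cardinal | ∃ S : Set (ℕ → Bool), Cardinal.mk S = c ∧ ¬ IsMeagre S}

/-! For a fixed `f`, a random `g` agrees with `f` on `I_k` with probability `2 ^ (-2 ^ (k + 1))`;
these probabilities are summable, so by Borel–Cantelli almost every `g` satisfies `f ⋔ g`. Fewer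
than `cov(N)` such null exceptional sets cannot cover `2^ω`, and a point outside all of them bounds
the family.

For a fixed `g`, the `f` with `¬ f ⋔ g` are those that copy `g` on infinitely many `I_k`: a
countable intersection of dense open sets, since any finite piece of information about `f` is
compatible with copying `g` on a far-away interval. So every `⋔`-bounded family is meagre, and the
cardinal inequalities follow because `2^ω` itself is not meagre. -/

lemma card_seg (k : ℕ) : (seg k).card = 2 ^ (k + 1) := by
  have h : 2 ≤ 2 ^ (k + 1) := Nat.le_self_pow (Nat.succ_ne_zero k) 2
  simp only [seg, Nat.card_Ico, pow_succ 2 (k + 1)]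
  omega

lemma le_of_mem_seg {i k : ℕ} (hi : i ∈ seg k) : k ≤ i := by
  have h : k + 2 ≤ 2 ^ (k + 1) := Nat.lt_two_pow_self
  simp only [seg, Finset.mem_Ico] at hi
  omega

section Measure

variable {μ : Measure (ℕ → Bool)}

lemma IsUniformProductMeasure.measure_setOf_eqSeg (hμ : IsUniformProductMeasure μ)
    (f : ℕ → Bool) (k : ℕ) : μ {g | eqSeg f g k} = 2⁻¹ ^ 2 ^ (k + 1) := by
  simpa only [eqSeg, eq_comm, card_seg] using hμ.2 (seg k) f

lemma IsUniformProductMeasure.tsum_measure_setOf_eqSeg_ne_top (hμ : IsUniformProductMeasure μ)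
    (f : ℕ → Bool) : ∑' k, μ {g | eqSeg f g k} ≠ ⊤ := by
  have hle : ∀ k : ℕ, μ {g | eqSeg f g k} ≤ 2⁻¹ ^ k := fun k => by
    rw [hμ.measure_setOf_eqSeg]
    exact pow_le_pow_of_le_one zero_le (by norm_num)
      (Nat.lt_two_pow_self.le.trans (Nat.pow_le_pow_right two_pos k.le_succ))
  refine ne_top_of_le_ne_top ?_ (ENNReal.tsum_le_tsum hle)
  rw [ENNReal.tsum_geometric_two]
  exact ENNReal.ofNat_ne_top

lemma IsUniformProductMeasure.ae_pfork (hμ : IsUniformProductMeasure μ) (f : ℕ → Bool) :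
    ∀ᵐ g ∂μ, pfork f g := by
  filter_upwards [ae_eventually_notMem (hμ.tsum_measure_setOf_eqSeg_ne_top f)] with g hg
  exact Filter.eventually_atTop.1 hg

lemma covNull_le_mk_of_sUnion_eq_univ {𝒞 : Set (Set (ℕ → Bool))} (hnull : ∀ A ∈ 𝒞, μ A = 0)
    (hcover : ⋃₀ 𝒞 = Set.univ) : covNull μ ≤ Cardinal.mk 𝒞 :=
  csInf_le' ⟨𝒞, rfl, hnull, hcover⟩

lemma exists_forall_of_mk_lt_covNull {R : (ℕ → Bool) → (ℕ → Bool) → Prop}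
    (hR : ∀ f, ∀ᵐ g ∂μ, R f g) {F : Set (ℕ → Bool)} (hF : Cardinal.mk F < covNull μ) :
    ∃ g, ∀ f ∈ F, R f g := by
  by_contra! hunbounded
  have hcover : ⋃₀ ((fun f => {g | ¬ R f g}) '' F) = Set.univ :=
    Set.eq_univ_of_forall fun g => by simpa using hunbounded g
  have hnull : ∀ A ∈ (fun f => {g | ¬ R f g}) '' F, μ A = 0 := by
    rintro _ ⟨f, -, rfl⟩
    exact ae_iff.1 (hR f)
  exact (covNull_le_mk_of_sUnion_eq_univ hnull hcover).trans Cardinal.mk_image_le |>.not_gt hF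

end Measure

lemma isOpen_setOf_eqSeg (g : ℕ → Bool) (k : ℕ) : IsOpen {f : ℕ → Bool | eqSeg f g k} := by
  simp only [eqSeg, Set.ofPred_forall]
  exact isOpen_biInter_finset fun i _ =>
    (continuous_apply (A := fun _ => Bool) i).isOpen_preimage {g i} (isOpen_discrete _)

lemma eqSeg_piecewise_seg (f g : ℕ → Bool) (k : ℕ) : eqSeg ((seg k).piecewise g f) g k :=
  fun _ hi => Finset.piecewise_eq_of_mem _ _ _ hi

lemma tendsto_piecewise_seg (f g : ℕ → Bool) :
    Filter.Tendsto (fun k => (seg k).piecewise g f) Filter.atTop (nhds f) := by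
  refine tendsto_pi_nhds.2 fun i => tendsto_const_nhds.congr' ?_
  filter_upwards [Filter.eventually_gt_atTop i] with k hk
  exact (Finset.piecewise_eq_of_notMem _ _ _ fun hi => (le_of_mem_seg hi).not_gt hk).symm

lemma dense_iUnion_setOf_eqSeg (g : ℕ → Bool) (n : ℕ) :
    Dense (⋃ k ≥ n, {f : ℕ → Bool | eqSeg f g k}) := fun f => by
  refine mem_closure_of_tendsto (tendsto_piecewise_seg f g) ?_
  filter_upwards [Filter.eventually_ge_atTop n] with k hk
  exact Set.mem_biUnion hk (eqSeg_piecewise_seg f g k)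

lemma isMeagre_setOf_pfork (g : ℕ → Bool) : IsMeagre {f | pfork f g} := by
  have hcompl : {f | pfork f g}ᶜ = ⋂ n, ⋃ k ≥ n, {f | eqSeg f g k} := by
    ext f
    simp [pfork]
  rw [IsMeagre, hcompl, countable_iInter_mem]
  exact fun n => residual_of_dense_open
    (isOpen_biUnion fun k _ => isOpen_setOf_eqSeg g k) (dense_iUnion_setOf_eqSeg g n)

lemma not_exists_forall_pfork_of_not_isMeagre {S : Set (ℕ → Bool)} (hS : ¬ IsMeagre S) :
    ¬ ∃ g, ∀ f ∈ S, pfork f g :=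
  fun ⟨g, hg⟩ => hS ((isMeagre_setOf_pfork g).mono hg)

lemma not_isMeagre_univ : ¬ IsMeagre (Set.univ : Set (ℕ → Bool)) :=
  not_isMeagre_of_isOpen isOpen_univ Set.univ_nonempty

lemma covNull_le_bPfork {μ : Measure (ℕ → Bool)} (hμ : IsUniformProductMeasure μ) :
    covNull μ ≤ bPfork := by
  refine le_csInf ⟨_, Set.univ, rfl, not_exists_forall_pfork_of_not_isMeagre not_isMeagre_univ⟩ ?_
  rintro _ ⟨F, rfl, hF⟩
  exact not_lt.1 fun hlt => hF (exists_forall_of_mk_lt_covNull hμ.ae_pfork hlt)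

lemma bPfork_le_nonMeagre : bPfork ≤ nonMeagre := by
  refine csInf_le_csInf' ⟨_, Set.univ, rfl, not_isMeagre_univ⟩ ?_
  rintro _ ⟨S, rfl, hS⟩
  exact ⟨S, rfl, not_exists_forall_pfork_of_not_isMeagre hS⟩

/-- `cov(N) ≤ 𝔟_⋔ ≤ non(M)`: every family of size `< cov(N)` is `⋔`-bounded,
and every non-meager set is a `⋔`-unbounded family. -/
theorem covNull_le_bPfork_le_nonMeagre (μ : Measure (ℕ → Bool))
    (hμ : IsUniformProductMeasure μ) :
    (∀ F : Set (ℕ → Bool), Cardinal.mk F < covNull μ →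
      ∃ g : ℕ → Bool, ∀ f ∈ F, pfork f g) ∧
    (∀ S : Set (ℕ → Bool), ¬ IsMeagre S → ¬ ∃ g : ℕ → Bool, ∀ f ∈ S, pfork f g) ∧
    covNull μ ≤ bPfork ∧ bPfork ≤ nonMeagre :=
  ⟨fun _ => exists_forall_of_mk_lt_covNull hμ.ae_pfork,
    fun _ => not_exists_forall_pfork_of_not_isMeagre, covNull_le_bPfork hμ, bPfork_le_nonMeagre⟩
end
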